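/- For the cyclic group G of even order n, the 3-domatic number of the Latin square graph L_3(L_G, n) equals ⌊n²/(n+1)⌋ = n − 1. -/

import Mathlib

/-!
A set of cells meeting every row, column and symbol of a Latin square is 3-dominating in its
Latin square graph: a cell outside it sees one member in each of its three lines, and these are
distinct. Conversely, if a 3-dominating set `S` misses a line, each of the `n` cells of that line
needs three neighbours in `S` on the two other lines through it, and summing over the line gives
`3 n ≤ 2 |S|`. Hence a 3-dominating set with at most `n` cells would be a transversal, which the
Cayley table of `ℤ/n` does not have for even `n`; so every part of a 3-domatic partition has at
least `n + 1` of the `n²` cells, and there are at most `⌊n² / (n + 1)⌋ = n - 1` parts. Colouring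
the cells by `ℤ/(n - 1)` so that every line sees every colour attains this bound.
-/

def IsLatin (n : ℕ) (L : Fin n → Fin n → Fin n) : Prop :=
  (∀ i, Function.Bijective (L i)) ∧ (∀ j, Function.Bijective fun i => L i j)

def latinGraph (n : ℕ) (L : Fin n → Fin n → Fin n) : SimpleGraph (Fin n × Fin n) :=
  SimpleGraph.fromRel fun a b => a.1 = b.1 ∨ a.2 = b.2 ∨ L a.1 a.2 = L b.1 b.2

def IsKDominating {V : Type*} (G : SimpleGraph V) (k : ℕ) (S : Set V) : Prop :=
  ∀ v ∉ S, k ≤ (S ∩ G.neighborSet v).ncard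

def IsTransversal (n : ℕ) (L : Fin n → Fin n → Fin n) (S : Set (Fin n × Fin n)) : Prop :=
  (∀ i : Fin n, ∃! c, c ∈ S ∧ c.1 = i) ∧
  (∀ j : Fin n, ∃! c, c ∈ S ∧ c.2 = j) ∧
  (∀ s : Fin n, ∃! c, c ∈ S ∧ L c.1 c.2 = s)

def IsQuasiTransversal (n : ℕ) (L : Fin n → Fin n → Fin n) (S : Set (Fin n × Fin n)) : Prop :=
  (∃ i0, ({c ∈ S | c.1 = i0}).ncard = 2 ∧ ∀ i, i ≠ i0 → ({c ∈ S | c.1 = i}).ncard = 1) ∧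
  (∃ j0, ({c ∈ S | c.2 = j0}).ncard = 2 ∧ ∀ j, j ≠ j0 → ({c ∈ S | c.2 = j}).ncard = 1) ∧
  (∃ s0, ({c ∈ S | L c.1 c.2 = s0}).ncard = 2 ∧ ∀ s, s ≠ s0 → ({c ∈ S | L c.1 c.2 = s}).ncard = 1)

def IsPartialTransversal (n : ℕ) (L : Fin n → Fin n → Fin n) (S : Set (Fin n × Fin n)) : Prop :=
  ∀ a ∈ S, ∀ b ∈ S, a ≠ b → a.1 ≠ b.1 ∧ a.2 ≠ b.2 ∧ L a.1 a.2 ≠ L b.1 b.2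

def IsKPlex (n : ℕ) (L : Fin n → Fin n → Fin n) (k : ℕ) (S : Set (Fin n × Fin n)) : Prop :=
  (∀ i, ({c ∈ S | c.1 = i}).ncard = k) ∧ (∀ j, ({c ∈ S | c.2 = j}).ncard = k) ∧
  (∀ s, ({c ∈ S | L c.1 c.2 = s}).ncard = k)

noncomputable def gamma3 (n : ℕ) (L : Fin n → Fin n → Fin n) : ℕ :=
  sInf {m | ∃ S : Set (Fin n × Fin n), IsKDominating (latinGraph n L) 3 S ∧ S.ncard = m}

noncomputable def domatic3 (n : ℕ) (L : Fin n → Fin n → Fin n) : ℕ :=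
  sSup {t | ∃ P : Fin t → Set (Fin n × Fin n),
    (Pairwise fun a b => Disjoint (P a) (P b)) ∧ (⋃ i, P i) = Set.univ ∧
    ∀ i, IsKDominating (latinGraph n L) 3 (P i)}

section Counting

variable {V ι : Type*} [Finite V] [Fintype ι]

lemma sum_ncard_inter_preimage (S : Set V) (f : V → ι) :
    ∑ x, (S ∩ f ⁻¹' {x}).ncard = S.ncard := by
  rw [← finsum_eq_sum_of_fintype, ← Set.ncard_iUnion_of_finite (fun _ => Set.toFinite _)]
  · congr 1
    ext v
    simp
  · intro x y hxy
    exact Set.disjoint_left.2 fun v hx hy => hxy (hx.2.symm.trans hy.2)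

lemma IsKDominating.three_mul_card_le_two_mul_ncard {G : SimpleGraph V} {S : Set V}
    (hS : IsKDominating G 3 S) (line : ι → V) (f g : V → ι)
    (hf : (f ∘ line).Bijective) (hg : (g ∘ line).Bijective) (hline : ∀ b, line b ∉ S)
    (hadj : ∀ b, ∀ c ∈ S, G.Adj (line b) c → f c = f (line b) ∨ g c = g (line b)) :
    3 * Fintype.card ι ≤ 2 * S.ncard := by
  have hb : ∀ b, 3 ≤ (S ∩ f ⁻¹' {f (line b)}).ncard + (S ∩ g ⁻¹' {g (line b)}).ncard := by
    intro b
    refine (hS _ (hline b)).trans ((Set.ncard_le_ncard ?_).trans (Set.ncard_union_le _ _))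
    rintro c ⟨hc, hbc⟩
    exact (hadj b c hc hbc).imp (fun h => ⟨hc, h⟩) (fun h => ⟨hc, h⟩)
  calc 3 * Fintype.card ι = ∑ _b : ι, 3 := by simp [mul_comm]
    _ ≤ ∑ b, ((S ∩ f ⁻¹' {f (line b)}).ncard + (S ∩ g ⁻¹' {g (line b)}).ncard) :=
        Finset.sum_le_sum fun b _ => hb b
    _ = ∑ x, (S ∩ f ⁻¹' {x}).ncard + ∑ x, (S ∩ g ⁻¹' {x}).ncard := by
        rw [Finset.sum_add_distrib]
        exact congrArg₂ (· + ·) (hf.sum_comp fun x => (S ∩ f ⁻¹' {x}).ncard)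
          (hg.sum_comp fun x => (S ∩ g ⁻¹' {x}).ncard)
    _ = 2 * S.ncard := by rw [sum_ncard_inter_preimage, sum_ncard_inter_preimage, two_mul]

end Counting

def MeetsEveryLine (n : ℕ) (L : Fin n → Fin n → Fin n) (S : Set (Fin n × Fin n)) : Prop :=
  (∀ i, ∃ c ∈ S, c.1 = i) ∧ (∀ j, ∃ c ∈ S, c.2 = j) ∧ (∀ s, ∃ c ∈ S, L c.1 c.2 = s)

section Latin

variable {n : ℕ} {L : Fin n → Fin n → Fin n} {S : Set (Fin n × Fin n)}

lemma latinGraph_adj {a b : Fin n × Fin n} :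
    (latinGraph n L).Adj a b ↔ a ≠ b ∧ (a.1 = b.1 ∨ a.2 = b.2 ∨ L a.1 a.2 = L b.1 b.2) := by
  rw [latinGraph, SimpleGraph.fromRel_adj]
  constructor
  · rintro ⟨hab, h | h⟩ <;> exact ⟨hab, by tauto⟩
  · rintro ⟨hab, h⟩
    exact ⟨hab, Or.inl h⟩

namespace IsLatin

lemma eq_of_fst_eq (hL : IsLatin n L) {a b : Fin n × Fin n} (h1 : a.1 = b.1)
    (h : L a.1 a.2 = L b.1 b.2) : a = b :=
  Prod.ext h1 ((hL.1 a.1).1 (by rw [h, h1]))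

lemma eq_of_snd_eq (hL : IsLatin n L) {a b : Fin n × Fin n} (h2 : a.2 = b.2)
    (h : L a.1 a.2 = L b.1 b.2) : a = b :=
  Prod.ext ((hL.2 a.2).1 (show L a.1 a.2 = L b.1 a.2 by rw [h, h2])) h2

lemma isKDominating_of_meetsEveryLine (hL : IsLatin n L) (hS : MeetsEveryLine n L S) :
    IsKDominating (latinGraph n L) 3 S := by
  intro v hv
  obtain ⟨⟨r, hrS, hr⟩, ⟨c, hcS, hc⟩, ⟨d, hdS, hd⟩⟩ :=
    And.imp (· v.1) (And.imp (· v.2) (· (L v.1 v.2))) hS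
  have hne : ∀ x ∈ S, x ≠ v := fun x hx hxv => hv (hxv ▸ hx)
  have hrc : r ≠ c := fun h => hne r hrS (Prod.ext hr (h ▸ hc))
  have hrd : r ≠ d := fun h => hne r hrS (hL.eq_of_fst_eq hr (h ▸ hd))
  have hcd : c ≠ d := fun h => hne c hcS (hL.eq_of_snd_eq hc (h ▸ hd))
  have hsub : {r, c, d} ⊆ S ∩ (latinGraph n L).neighborSet v := by
    rintro x (rfl | rfl | rfl) <;> refine ⟨‹_›, latinGraph_adj.2 ⟨(hne _ ‹_›).symm, ?_⟩⟩
    · exact Or.inl hr.symm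
    · exact Or.inr (Or.inl hc.symm)
    · exact Or.inr (Or.inr hd.symm)
  calc 3 = ({r, c, d} : Set (Fin n × Fin n)).ncard :=
        (Set.ncard_eq_three.2 ⟨r, c, d, hrc, hrd, hcd, rfl⟩).symm
    _ ≤ _ := Set.ncard_le_ncard hsub

lemma meetsEveryLine_of_isKDominating (hL : IsLatin n L)
    (hS : IsKDominating (latinGraph n L) 3 S) (hcard : 2 * S.ncard < 3 * n) :
    MeetsEveryLine n L S := by
  have hcard' : ¬ 3 * Fintype.card (Fin n) ≤ 2 * S.ncard := by simpa using hcard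
  refine ⟨fun a => ?_, fun a => ?_, fun s => ?_⟩ <;> by_contra! h <;> apply hcard'
  · refine hS.three_mul_card_le_two_mul_ncard (fun b => (a, b)) Prod.snd (fun c => L c.1 c.2)
      Function.bijective_id (hL.1 a) (fun b hb => h _ hb rfl) ?_
    intro b c hc hbc
    obtain ⟨-, h' | h' | h'⟩ := latinGraph_adj.1 hbc
    exacts [absurd h'.symm (h c hc), Or.inl h'.symm, Or.inr h'.symm]
  · refine hS.three_mul_card_le_two_mul_ncard (fun b => (b, a)) Prod.fst (fun c => L c.1 c.2)
      Function.bijective_id (hL.2 a) (fun b hb => h _ hb rfl) ?_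
    intro b c hc hbc
    obtain ⟨-, h' | h' | h'⟩ := latinGraph_adj.1 hbc
    exacts [Or.inl h'.symm, absurd h'.symm (h c hc), Or.inr h'.symm]
  · let col : Fin n → Fin n := fun b => Function.surjInv (hL.1 b).2 s
    have hcol : ∀ b, L b (col b) = s := fun b => Function.surjInv_eq (hL.1 b).2 s
    have hcol_inj : col.Injective := fun b b' hbb' =>
      (hL.2 (col b')).1 ((congrArg (L b) hbb').symm.trans ((hcol b).trans (hcol b').symm))
    refine hS.three_mul_card_le_two_mul_ncard (fun b => (b, col b)) Prod.fst Prod.snd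
      Function.bijective_id (Finite.injective_iff_bijective.1 hcol_inj)
      (fun b hb => h _ hb (hcol b)) ?_
    intro b c hc hbc
    obtain ⟨-, h' | h' | h'⟩ := latinGraph_adj.1 hbc
    exacts [Or.inl h'.symm, Or.inr h'.symm, absurd (h'.symm.trans (hcol b)) (h c hc)]

end IsLatin

end Latin

section Cyclic

variable {n : ℕ}

lemma isLatin_add [NeZero n] : IsLatin n (fun i j => i + j) :=
  ⟨fun i => (Equiv.addLeft i).bijective, fun j => (Equiv.addRight j).bijective⟩

lemma Finset.sum_val_eq_sum_univ_of_card_le {α : Type*} (T : Finset α) (f : α → Fin n)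
    (hcard : T.card ≤ n) (hf : ∀ x, ∃ c ∈ T, f c = x) :
    ∑ c ∈ T, (f c).val = ∑ x : Fin n, x.val := by
  have hsurj : ∀ x ∈ (Finset.univ : Finset (Fin n)), ∃ c, ∃ hc : c ∈ T, f c = x :=
    fun x _ => by simpa using hf x
  refine Finset.sum_nbij f (fun _ _ => Finset.mem_univ _)
    (Finset.inj_on_of_surj_on_of_card_le (fun c _ => f c) (fun _ _ => Finset.mem_univ _) hsurj
      (by simpa using hcard)) (fun x _ => ?_) (fun _ _ => rfl)
  obtain ⟨c, hc, rfl⟩ := hf x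
  exact ⟨c, hc, rfl⟩

/-- A set of at most `n` cells meeting every line of `ℤ/n` would be a transversal; summing its
row, column and symbol indices gives `2 * (0 + ⋯ + (n - 1)) ≡ 0 + ⋯ + (n - 1) (mod n)`, which
fails for even `n`. -/
lemma not_meetsEveryLine_add (hn : Even n) (hpos : 0 < n) {S : Set (Fin n × Fin n)}
    (hcard : S.ncard ≤ n) : ¬ MeetsEveryLine n (fun i j => i + j) S := by
  classical
  rintro ⟨hrow, hcol, hsym⟩
  set T := S.toFinset
  have hT : T.card ≤ n := by rwa [Set.ncard_eq_toFinset_card'] at hcard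
  have hsum (f : Fin n × Fin n → Fin n) (hf : ∀ x, ∃ c ∈ S, f c = x) :
      ∑ c ∈ T, (f c).val = ∑ x : Fin n, x.val :=
    T.sum_val_eq_sum_univ_of_card_le f hT (by simpa [T] using hf)
  set G := ∑ x : Fin n, x.val
  set W := ∑ c ∈ T, (c.1.val + c.2.val) / n
  have hG : G * 2 = n * (n - 1) := by
    rw [← Finset.sum_range_id_mul_two]
    exact congrArg (· * 2) (Fin.sum_univ_eq_sum_range id n)
  have hwrap : ∑ c ∈ T, (c.1.val + c.2.val) = ∑ c ∈ T, (c.1 + c.2).val + n * W := by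
    rw [Finset.mul_sum, ← Finset.sum_add_distrib]
    refine Finset.sum_congr rfl fun c _ => ?_
    rw [Fin.val_add]
    exact (Nat.mod_add_div _ n).symm
  rw [Finset.sum_add_distrib, hsum Prod.fst hrow, hsum Prod.snd hcol,
    hsum (fun c => c.1 + c.2) hsym] at hwrap
  have hW : n * (2 * W) = n * (n - 1) := by rw [← hG]; linarith
  obtain ⟨k, rfl⟩ := hn
  have := Nat.eq_of_mul_eq_mul_left hpos hW
  omega

lemma lt_ncard_of_isKDominating_add (hn : Even n) (hpos : 0 < n) {S : Set (Fin n × Fin n)}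
    (hS : IsKDominating (latinGraph n (fun i j => i + j)) 3 S) : n < S.ncard := by
  have : NeZero n := ⟨hpos.ne'⟩
  by_contra! hcard
  exact not_meetsEveryLine_add hn hpos hcard
    (isLatin_add.meetsEveryLine_of_isKDominating hS (by omega))

end Cyclic

section Domatic

variable {n : ℕ} {L : Fin n → Fin n → Fin n}

def IsDomatic3Partition (n : ℕ) (L : Fin n → Fin n → Fin n) {t : ℕ}
    (P : Fin t → Set (Fin n × Fin n)) : Prop :=
  (Pairwise fun a b => Disjoint (P a) (P b)) ∧ (⋃ i, P i) = Set.univ ∧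
    ∀ i, IsKDominating (latinGraph n L) 3 (P i)

lemma IsDomatic3Partition.le_sq_div {t k : ℕ} {P : Fin t → Set (Fin n × Fin n)}
    (hP : IsDomatic3Partition n L P) (hk0 : 0 < k)
    (hk : ∀ S, IsKDominating (latinGraph n L) 3 S → k ≤ S.ncard) : t ≤ n ^ 2 / k := by
  obtain ⟨hdisj, hcover, hdom⟩ := hP
  rw [Nat.le_div_iff_mul_le hk0]
  calc t * k = ∑ _i : Fin t, k := by simp
    _ ≤ ∑ i, (P i).ncard := Finset.sum_le_sum fun i _ => hk _ (hdom i)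
    _ = (⋃ i, P i).ncard := by
        rw [Set.ncard_iUnion_of_finite (fun _ => Set.toFinite _) hdisj, finsum_eq_sum_of_fintype]
    _ = n ^ 2 := by simp [hcover, sq]

lemma isDomatic3Partition_fibres {α : Type*} {t : ℕ} (χ : Fin n × Fin n → α) (e : Fin t ≃ α)
    (hχ : ∀ a, IsKDominating (latinGraph n L) 3 (χ ⁻¹' {a})) :
    IsDomatic3Partition n L fun i => χ ⁻¹' {e i} := by
  refine ⟨fun i j hij => ?_, ?_, fun i => hχ (e i)⟩
  · exact (Set.disjoint_singleton.2 (e.injective.ne hij)).preimage χ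
  · ext v
    simpa using ⟨e.symm (χ v), by simp⟩

lemma domatic3_le_sq_div {k : ℕ} (hk0 : 0 < k)
    (hk : ∀ S, IsKDominating (latinGraph n L) 3 S → k ≤ S.ncard) :
    domatic3 n L ≤ n ^ 2 / k :=
  csSup_le' fun _ ⟨_, hP⟩ => IsDomatic3Partition.le_sq_div hP hk0 hk

lemma IsDomatic3Partition.le_domatic3 {t k : ℕ} {P : Fin t → Set (Fin n × Fin n)}
    (hP : IsDomatic3Partition n L P) (hk0 : 0 < k)
    (hk : ∀ S, IsKDominating (latinGraph n L) 3 S → k ≤ S.ncard) : t ≤ domatic3 n L :=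
  le_csSup ⟨n ^ 2 / k, fun _ ⟨_, hQ⟩ => IsDomatic3Partition.le_sq_div hQ hk0 hk⟩ ⟨P, hP⟩

end Domatic

section Colouring

variable {m : ℕ}

/-- On the symbol line `s`, the cells `(s - j, j)` with `j ≠ 0` get the colours
`s + j + [s < j]`, which cover every colour except possibly `s + 1`; the remaining cell `(s, 0)`
gets `2 s + 1` to close that gap, and column `0` still sees every colour because `m` is odd. -/
def colour (m : ℕ) (c : Fin (m + 1) × Fin (m + 1)) : ZMod m :=
  if c.2 = 0 then 2 * c.1.val + 1 else c.1.val + 2 * c.2.val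

lemma two_mul_inv_two (hm : Odd m) : (2 : ZMod m) * 2⁻¹ = 1 := by
  exact_mod_cast ZMod.coe_mul_inv_eq_one 2 (Nat.coprime_two_left.2 hm)

lemma exists_ne_zero_natCast_val_eq [NeZero m] (y : ZMod m) :
    ∃ j : Fin (m + 1), j ≠ 0 ∧ (j.val : ZMod m) = y := by
  by_cases hy : y.val = 0
  · exact ⟨Fin.last m, by simp [Fin.ext_iff, NeZero.ne m], by simp [(ZMod.val_eq_zero y).1 hy]⟩
  · exact ⟨⟨y.val, (ZMod.val_lt y).trans m.lt_succ_self⟩, by simpa [Fin.ext_iff] using hy,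
      ZMod.natCast_zmod_val y⟩

lemma natCast_val_sub_add_natCast_val (s j : Fin (m + 1)) :
    ((s - j).val : ZMod m) + j.val = s.val + if s < j then 1 else 0 := by
  have h : (s - j).val + j.val = s.val + if s < j then m + 1 else 0 := by
    split_ifs with hsj
    · rw [Fin.coe_sub_iff_lt.2 hsj]
      omega
    · rw [Fin.coe_sub_iff_le.2 (not_lt.1 hsj)]
      have := Fin.le_def.1 (not_lt.1 hsj)
      omega
  have := congrArg (Nat.cast : ℕ → ZMod m) h
  push_cast at this
  split_ifs at this ⊢ <;> simpa using this

lemma colour_sub_self (s : Fin (m + 1)) {j : Fin (m + 1)} (hj : j ≠ 0) :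
    colour m (s - j, j) = s.val + (j.val + if s < j then 1 else 0 : ℕ) := by
  rw [colour, if_neg hj]
  push_cast
  linear_combination natCast_val_sub_add_natCast_val s j

lemma exists_val_add_ite_eq (s : Fin (m + 1)) {p : ℕ} (hp0 : 0 < p) (hpm : p ≤ m)
    (hps : p ≠ s.val + 1) : ∃ j : Fin (m + 1), j ≠ 0 ∧ j.val + (if s < j then 1 else 0) = p := by
  by_cases hp : p ≤ s.val
  · refine ⟨⟨p, by omega⟩, by simp [Fin.ext_iff]; omega, ?_⟩
    simp only [Fin.lt_def, if_neg (show ¬s.val < p by omega)]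
    omega
  · refine ⟨⟨p - 1, by omega⟩, by simp [Fin.ext_iff]; omega, ?_⟩
    simp only [Fin.lt_def, if_pos (show s.val < p - 1 by omega)]
    omega

lemma exists_colour_eq_of_fst (hm : Odd m) (i : Fin (m + 1)) (k : ZMod m) :
    ∃ j, colour m (i, j) = k := by
  have : NeZero m := ⟨hm.pos.ne'⟩
  obtain ⟨j, hj0, hj⟩ := exists_ne_zero_natCast_val_eq ((k - (i.val : ZMod m)) * 2⁻¹)
  refine ⟨j, ?_⟩
  rw [colour, if_neg hj0, hj]
  linear_combination (k - (i.val : ZMod m)) * two_mul_inv_two hm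

lemma exists_colour_eq_of_snd (hm : Odd m) (j : Fin (m + 1)) (k : ZMod m) :
    ∃ i, colour m (i, j) = k := by
  have : NeZero m := ⟨hm.pos.ne'⟩
  by_cases hj0 : j = 0
  · obtain ⟨i, -, hi⟩ := exists_ne_zero_natCast_val_eq ((k - 1) * 2⁻¹)
    refine ⟨i, ?_⟩
    rw [colour, if_pos hj0, hi]
    linear_combination (k - 1) * two_mul_inv_two hm
  · obtain ⟨i, -, hi⟩ := exists_ne_zero_natCast_val_eq (k - 2 * (j.val : ZMod m))
    refine ⟨i, ?_⟩
    rw [colour, if_neg hj0, hi]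
    ring

lemma exists_colour_eq_of_add (hm : Odd m) (s : Fin (m + 1)) (k : ZMod m) :
    ∃ c : Fin (m + 1) × Fin (m + 1), c.1 + c.2 = s ∧ colour m c = k := by
  have : NeZero m := ⟨hm.pos.ne'⟩
  by_cases hk : k = 2 * s.val + 1
  · exact ⟨(s, 0), add_zero s, by rw [colour, if_pos rfl, hk]⟩
  obtain ⟨p, hp0, hpm, hp⟩ : ∃ p, 0 < p ∧ p ≤ m ∧ (p : ZMod m) = k - (s.val : ZMod m) := by
    obtain ⟨j, hj0, hj⟩ := exists_ne_zero_natCast_val_eq (k - (s.val : ZMod m))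
    exact ⟨j.val, Fin.pos_iff_ne_zero.2 hj0, Nat.lt_succ_iff.1 j.isLt, hj⟩
  have hps : p ≠ s.val + 1 := by
    rintro rfl
    push_cast at hp
    exact hk (by linear_combination -hp)
  obtain ⟨j, hj0, hjp⟩ := exists_val_add_ite_eq s hp0 hpm hps
  refine ⟨(s - j, j), sub_add_cancel s j, ?_⟩
  rw [colour_sub_self s hj0, hjp, hp]
  ring

lemma meetsEveryLine_colour_preimage (hm : Odd m) (k : ZMod m) :
    MeetsEveryLine (m + 1) (fun i j => i + j) (colour m ⁻¹' {k}) := by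
  refine ⟨fun i => ?_, fun j => ?_, fun s => ?_⟩
  · obtain ⟨j, hj⟩ := exists_colour_eq_of_fst hm i k
    exact ⟨(i, j), hj, rfl⟩
  · obtain ⟨i, hi⟩ := exists_colour_eq_of_snd hm j k
    exact ⟨(i, j), hi, rfl⟩
  · obtain ⟨c, hcs, hc⟩ := exists_colour_eq_of_add hm s k
    exact ⟨c, hc, hcs⟩

end Colouring

theorem stmt17 (n : ℕ) (hn : Even n) (hpos : 0 < n) :
    domatic3 n (fun i j => i + j) = n - 1 ∧ n ^ 2 / (n + 1) = n - 1 := by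
  obtain ⟨m, rfl⟩ : ∃ m, n = m + 1 := ⟨n - 1, by omega⟩
  have hm : Odd m := by simpa [Nat.even_add_one] using hn
  have : NeZero m := ⟨hm.pos.ne'⟩
  have hdiv : (m + 1) ^ 2 / (m + 2) = m := Nat.div_eq_of_lt_le (by nlinarith) (by nlinarith)
  have hk : ∀ S, IsKDominating (latinGraph (m + 1) (fun i j => i + j)) 3 S → m + 2 ≤ S.ncard :=
    fun S hS => lt_ncard_of_isKDominating_add hn hpos hS
  have hcolour : IsDomatic3Partition (m + 1) (fun i j => i + j)
      fun i => colour m ⁻¹' {ZMod.finEquiv m i} :=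
    isDomatic3Partition_fibres (colour m) (ZMod.finEquiv m).toEquiv fun k =>
      isLatin_add.isKDominating_of_meetsEveryLine (meetsEveryLine_colour_preimage hm k)
  rw [Nat.add_sub_cancel]
  exact ⟨le_antisymm ((domatic3_le_sq_div (by omega) hk).trans_eq hdiv)
    (hcolour.le_domatic3 (by omega) hk), hdiv⟩
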